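/- arXiv:1009.2277 — 6 statements merged into one kernel-verified Lean document; each statement's English description precedes it below -/
import Mathlib

section
/- Let X be a compact metric space and f : X → X a continuous map. Then f is Δ-transitive if and only if for every positive integer m and all nonempty open sets U, V₁, …, V_m ⊆ X there exists an integer n ≥ 1 such that U ∩ f⁻ⁿ(V₁) ∩ f⁻²ⁿ(V₂) ∩ … ∩ f⁻ᵐⁿ(V_m) ≠ ∅. -/
open Set Function

/-- A continuous self-map is topologically transitive if every pair of nonempty
open sets is connected by some positive iterate. -/
def TopTransitive {X : Type*} [TopologicalSpace X] (f : X → X) : Prop :=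
  ∀ U V : Set X, IsOpen U → IsOpen V → U.Nonempty → V.Nonempty →
    ∃ n : ℕ, 0 < n ∧ (f^[n] '' U ∩ V).Nonempty

/-- The map `f^{(∗m)} = f × f² × ⋯ × f^m` acting on `X^m` (coordinates indexed by `Fin m`,
where coordinate `i` is moved by `f^[i+1]`). -/
def starMap {X : Type*} (f : X → X) (m : ℕ) : (Fin m → X) → (Fin m → X) :=
  fun x i => f^[(i : ℕ) + 1] (x i)

/-- `f` is weakly mixing if `f × f` is topologically transitive. -/
def WeaklyMixing {X : Type*} [TopologicalSpace X] (f : X → X) : Prop :=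
  TopTransitive (fun p : X × X => (f p.1, f p.2))

/-- `f` is multi-transitive if `f × f² × ⋯ × f^m` is topologically transitive
for every `m ≥ 1`. -/
def MultiTransitive {X : Type*} [TopologicalSpace X] (f : X → X) : Prop :=
  ∀ m : ℕ, 1 ≤ m → TopTransitive (starMap f m)

/-- `f` is Δ-transitive if for each `m ≥ 1` there is a residual set `Y ⊆ X` such that
for every `x ∈ Y` the diagonal tuple `(x, …, x)` has dense orbit under `f × f² × ⋯ × f^m`. -/
def DeltaTransitive {X : Type*} [TopologicalSpace X] (f : X → X) : Prop :=
  ∀ m : ℕ, 1 ≤ m → ∃ Y : Set X, Y ∈ residual X ∧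
    ∀ x ∈ Y, Dense (Set.range fun n : ℕ => (starMap f m)^[n] (fun _ : Fin m => x))

/-- A set `S ⊆ ℕ` is syndetic if there is `L > 0` with `[n, n+L] ∩ S ≠ ∅` for every `n`. -/
def Syndetic (S : Set ℕ) : Prop :=
  ∃ L : ℕ, 0 < L ∧ ∀ n : ℕ, ∃ k ∈ S, n ≤ k ∧ k ≤ n + L

/-- `N(U,V;f) = {n > 0 : f^n(U) ∩ V ≠ ∅}`. -/
def NSet {X : Type*} (f : X → X) (U V : Set X) : Set ℕ :=
  {n | 0 < n ∧ (f^[n] '' U ∩ V).Nonempty}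

/-- `f` is syndetically transitive if `N(U,V;f)` is syndetic for all nonempty open `U, V`. -/
def SyndeticallyTransitive {X : Type*} [TopologicalSpace X] (f : X → X) : Prop :=
  ∀ U V : Set X, IsOpen U → IsOpen V → U.Nonempty → V.Nonempty → Syndetic (NSet f U V)

/-- `f` is strongly transitive if for every nonempty open `U` there is `M > 0` with
`⋃_{j=1}^M f^j(U) = X`. -/
def StronglyTransitive {X : Type*} [TopologicalSpace X] (f : X → X) : Prop :=
  ∀ U : Set X, IsOpen U → U.Nonempty →
    ∃ M : ℕ, 0 < M ∧ (⋃ j ∈ Finset.Icc 1 M, f^[j] '' U) = Set.univ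

/-- `f` is minimal if the only nonempty closed `f`-invariant subset is the whole space. -/
def MinimalMap {X : Type*} [TopologicalSpace X] (f : X → X) : Prop :=
  ∀ K : Set X, IsClosed K → K.Nonempty → f '' K ⊆ K → K = Set.univ

/-!
Forward direction: a point `x ∈ U` of the residual set has a dense diagonal orbit in `Xᵐ`, and a
dense orbit returns at a positive time to every open set except possibly the singleton of its
starting point. So the only obstruction is `V₁ × ⋯ × Vₘ = {(x, …, x)}` with `x` isolated and not
periodic. Then the open set `⋃ⱼ f⁻ʲ{x}` contains the residual set, hence is dense, while the
forward orbit of `f x` avoids it; by density of the orbit of `x` it is contained in `{x}`, forcing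
`X = {x}` and `f x = x`.

Converse: the hypothesis says that `{x | ∃ n, (f^{(∗m)})ⁿ (x, …, x) ∈ b}` is dense (and open) for
every nonempty open `b ⊆ Xᵐ`; intersecting over a countable basis gives the residual set.
-/

theorem starMap_iterate {X : Type*} (f : X → X) (m n : ℕ) (x : Fin m → X) :
    (starMap f m)^[n] x = fun i : Fin m => f^[((i : ℕ) + 1) * n] (x i) := by
  induction n generalizing x with
  | zero => simp
  | succ n ih =>
    funext i
    rw [iterate_succ_apply, ih]
    simp only [starMap, ← iterate_add_apply]
    congr 1

section Orbits

variable {X : Type*} [TopologicalSpace X]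

theorem subset_singleton_of_forall_iterate_notMem [T1Space X] {g : X → X} {p : X}
    (hd : Dense (range fun n => g^[n] p)) {W : Set X} (hW : IsOpen W)
    (h : ∀ n, 0 < n → g^[n] p ∉ W) : W ⊆ {p} := by
  intro w hw
  by_contra hwp
  obtain ⟨_, ⟨hW', hp⟩, n, rfl⟩ :=
    hd.inter_open_nonempty (W \ {p}) (hW.sdiff isClosed_singleton) ⟨w, hw, hwp⟩
  rcases Nat.eq_zero_or_pos n with rfl | hn
  · exact hp rfl
  · exact h n hn hW'

theorem exists_pos_iterate_eq_of_isOpen_singleton [T1Space X] {f : X → X} (hf : Continuous f)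
    {x : X} (hx : IsOpen {x}) (hd : Dense (range fun n => f^[n] x))
    (hpre : Dense (⋃ j, f^[j] ⁻¹' {x})) : ∃ n, 0 < n ∧ f^[n] x = x := by
  by_contra! hper
  have hpre_sub : (⋃ j, f^[j] ⁻¹' {x}) ⊆ {x} := by
    refine subset_singleton_of_forall_iterate_notMem hd
      (isOpen_iUnion fun j => hx.preimage (hf.iterate j)) fun n hn hmem => ?_
    obtain ⟨j, hj⟩ := mem_iUnion.1 hmem
    exact hper (j + n) (by omega) (by rwa [iterate_add_apply])
  have huniv : ({x} : Set X) = univ := by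
    rw [← (hpre.mono hpre_sub).closure_eq, closure_singleton]
  exact hper 1 one_pos (by simpa [← huniv] using mem_univ (f x))

theorem residual_setOf_dense_range {Z : Type*} [TopologicalSpace Z] [SecondCountableTopology Z]
    {φ : ℕ → X → Z} (hφ : ∀ n, Continuous (φ n))
    (h : ∀ b : Set Z, IsOpen b → b.Nonempty → Dense (⋃ n, φ n ⁻¹' b)) :
    {x | Dense (range fun n => φ n x)} ∈ residual X := by
  obtain ⟨B, hBc, -, hB⟩ := TopologicalSpace.exists_countable_basis Z
  have hvisit : (⋂ b ∈ {b ∈ B | b.Nonempty}, ⋃ n, φ n ⁻¹' b) ∈ residual X :=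
    (countable_bInter_mem (hBc.mono (sep_subset _ _))).2 fun b hb =>
      residual_of_dense_open (isOpen_iUnion fun n => (hB.isOpen hb.1).preimage (hφ n))
        (h b (hB.isOpen hb.1) hb.2)
  refine Filter.mem_of_superset hvisit fun x hx => hB.dense_iff.2 fun b hbB hb => ?_
  obtain ⟨n, hn⟩ := mem_iUnion.1 (mem_iInter₂.1 hx b ⟨hbB, hb⟩)
  exact ⟨φ n x, hn, n, rfl⟩

end Orbits

section DeltaTransitive

variable {X : Type*} [TopologicalSpace X] {f : X → X}

theorem DeltaTransitive.exists_iterate_mem [T1Space X] [BaireSpace X] (hf : Continuous f)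
    (hΔ : DeltaTransitive f) {m : ℕ} (hm : 1 ≤ m) {U : Set X} (hU : IsOpen U)
    (hUne : U.Nonempty) {V : Fin m → Set X} (hV : ∀ i, IsOpen (V i))
    (hVne : ∀ i, (V i).Nonempty) :
    ∃ n : ℕ, 1 ≤ n ∧ (U ∩ ⋂ i : Fin m, f^[((i : ℕ) + 1) * n] ⁻¹' V i).Nonempty := by
  obtain ⟨Y, hY, horb⟩ := hΔ m hm
  have hYd := dense_of_mem_residual hY
  obtain ⟨x, hxU, hxY⟩ := hYd.inter_open_nonempty U hU hUne
  set p : Fin m → X := fun _ => x with hp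
  set i₀ : Fin m := ⟨0, hm⟩
  by_contra! hnone
  have hreturn : ∀ n, 0 < n → (starMap f m)^[n] p ∉ univ.pi V := fun n hn hmem =>
    eq_empty_iff_forall_notMem.1 (hnone n hn) x
      ⟨hxU, mem_iInter.2 fun i => by simpa [starMap_iterate] using hmem i (mem_univ i)⟩
  have hWopen : IsOpen (univ.pi V) := isOpen_set_pi finite_univ fun i _ => hV i
  have hW : univ.pi V = {p} :=
    (subset_singleton_iff_eq.1 (subset_singleton_of_forall_iterate_notMem (horb x hxY) hWopen
      hreturn)).resolve_left (univ_pi_nonempty_iff.2 hVne).ne_empty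
  have hxopen : IsOpen ({x} : Set X) := by
    have hdiag : (fun y : X => fun _ : Fin m => y) ⁻¹' {p} = {x} := by
      ext y
      simpa [hp, funext_iff] using ⟨fun h => h i₀, fun h _ => h⟩
    rw [← hdiag, ← hW]
    exact hWopen.preimage (continuous_pi fun _ => continuous_id)
  have hdense : Dense (range fun n => f^[n] x) := by
    have : Nonempty X := ⟨x⟩
    have := (surjective_eval i₀).denseRange.comp (horb x hxY) (continuous_apply i₀)
    simpa [DenseRange, comp_def, starMap_iterate, i₀] using this
  have hpre : Dense (⋃ j, f^[j] ⁻¹' {x}) := hYd.mono fun y hy => by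
    obtain ⟨_, hyp, n, rfl⟩ :=
      (horb y hy).inter_open_nonempty {p} (hW ▸ hWopen) (singleton_nonempty p)
    exact mem_iUnion.2 ⟨n, by simpa [starMap_iterate, i₀] using congrFun hyp i₀⟩
  obtain ⟨n, hn, hper⟩ := exists_pos_iterate_eq_of_isOpen_singleton hf hxopen hdense hpre
  refine hreturn n hn ?_
  rw [hW, starMap_iterate]
  funext i
  rw [mul_comm, iterate_mul]
  exact iterate_fixed hper _

theorem deltaTransitive_of_forall_exists_iterate_mem [SecondCountableTopology X]
    (hf : Continuous f)
    (h : ∀ m : ℕ, 1 ≤ m → ∀ U : Set X, IsOpen U → U.Nonempty →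
      ∀ V : Fin m → Set X, (∀ i, IsOpen (V i)) → (∀ i, (V i).Nonempty) →
        ∃ n : ℕ, 1 ≤ n ∧ (U ∩ ⋂ i : Fin m, f^[((i : ℕ) + 1) * n] ⁻¹' V i).Nonempty) :
    DeltaTransitive f := by
  intro m hm
  refine ⟨_, residual_setOf_dense_range (φ := fun n x => (starMap f m)^[n] fun _ => x)
    (fun n => ?_) (fun b hb hbne => ?_), fun x hx => hx⟩
  · simp only [starMap_iterate]
    exact continuous_pi fun i => hf.iterate _
  · rw [dense_iff_inter_open]
    intro u hu hune
    obtain ⟨z, hz⟩ := hbne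
    obtain ⟨w, hw, hwb⟩ := isOpen_pi_iff'.1 hb z hz
    obtain ⟨n, -, y, hyu, hy⟩ :=
      h m hm u hu hune w (fun i => (hw i).1) fun i => ⟨z i, (hw i).2⟩
    refine ⟨y, hyu, mem_iUnion.2 ⟨n, hwb fun i _ => ?_⟩⟩
    simpa [starMap_iterate] using mem_iInter.1 hy i

end DeltaTransitive

/-- `f` is Δ-transitive iff for every `m ≥ 1` and all nonempty open sets
`U, V₁, …, V_m` there is `n ≥ 1` with `U ∩ f⁻ⁿ(V₁) ∩ f⁻²ⁿ(V₂) ∩ ⋯ ∩ f⁻ᵐⁿ(V_m) ≠ ∅`. -/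
theorem statement0 {X : Type*} [MetricSpace X] [CompactSpace X] (f : X → X)
    (hf : Continuous f) :
    DeltaTransitive f ↔
      ∀ m : ℕ, 1 ≤ m → ∀ U : Set X, IsOpen U → U.Nonempty →
        ∀ V : Fin m → Set X, (∀ i, IsOpen (V i)) → (∀ i, (V i).Nonempty) →
          ∃ n : ℕ, 1 ≤ n ∧
            (U ∩ ⋂ i : Fin m, f^[((i : ℕ) + 1) * n] ⁻¹' V i).Nonempty :=
  ⟨fun hΔ _ hm _ hU hUne _ hV hVne => hΔ.exists_iterate_mem hf hm hU hUne hV hVne,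
    deltaTransitive_of_forall_exists_iterate_mem hf⟩
end

section
/- Let X be a compact metric space and f : X → X a continuous map which is weakly mixing and syndetically transitive. Then for every m ≥ 1 the map f^{(∗m)} = f × f² × … × f^m : X^m → X^m is weakly mixing and syndetically transitive. In particular, f is multi-transitive. -/
open Set Function

/-!
Weak mixing makes the sets `N(U,V)` a filter base: `N(U₁ ∩ f⁻ⁿU₂, V₁ ∩ f⁻ⁿV₂) ⊆ N(U₁,V₁) ∩ N(U₂,V₂)`
whenever `n ∈ N(U₁,U₂) ∩ N(V₁,V₂)`. Since `N(U, f⁻ʲV) + j ⊆ N(U,V)`, a single syndetic set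
`N(U',V') ⊆ ⋂_{j ≤ k} N(U, f⁻ʲV)` shows that `N(U,V)` is thickly syndetic: for every `k` the `n`
with `n, n+1, …, n+k ∈ N(U,V)` form a syndetic set. Thick syndeticity survives finite intersections
and the dilations `{n | i n ∈ S}`, and on boxes `N(∏ Uᵢ, ∏ Vᵢ; f^{(∗m)}) = ⋂ᵢ {n | (i+1) n ∈ N(Uᵢ,Vᵢ)}`,
so `f^{(∗m)}` and `f^{(∗m)} × f^{(∗m)}` again have thickly syndetic `N`-sets.
-/

def ThicklySyndetic (S : Set ℕ) : Prop :=
  ∀ k : ℕ, Syndetic {n | ∀ j ≤ k, n + j ∈ S}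

def ThicklySyndeticallyTransitive {X : Type*} [TopologicalSpace X] (f : X → X) : Prop :=
  ∀ U V : Set X, IsOpen U → IsOpen V → U.Nonempty → V.Nonempty → ThicklySyndetic (NSet f U V)

section SyndeticSets

variable {S T : Set ℕ}

theorem Syndetic.mono (hS : Syndetic S) (h : S ⊆ T) : Syndetic T := by
  obtain ⟨L, hL, hS⟩ := hS
  exact ⟨L, hL, fun n => (hS n).imp fun _ ⟨hk, hnk⟩ => ⟨h hk, hnk⟩⟩

theorem Syndetic.nonempty (hS : Syndetic S) : S.Nonempty := by
  obtain ⟨_, _, hS⟩ := hS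
  obtain ⟨k, hk, -⟩ := hS 0
  exact ⟨k, hk⟩

namespace ThicklySyndetic

theorem mono (hS : ThicklySyndetic S) (h : S ⊆ T) : ThicklySyndetic T :=
  fun k => (hS k).mono fun _ hn j hj => h (hn j hj)

theorem syndetic (hS : ThicklySyndetic S) : Syndetic S :=
  (hS 0).mono fun n hn => by simpa using hn 0 le_rfl

theorem inter (hS : ThicklySyndetic S) (hT : ThicklySyndetic T) : ThicklySyndetic (S ∩ T) := by
  intro k
  obtain ⟨L, hL, hA⟩ := hS k
  obtain ⟨L', hL', hB⟩ := hT (k + L)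
  refine ⟨L' + L, by omega, fun n => ?_⟩
  obtain ⟨b, hb, hnb, hbL'⟩ := hB n
  obtain ⟨a, ha, hba, haL⟩ := hA b
  refine ⟨a, fun j hj => ⟨ha j hj, ?_⟩, hnb.trans hba, by omega⟩
  simpa only [show b + (a + j - b) = a + j by omega] using hb (a + j - b) (by omega)

theorem preimage_mul_left (hS : ThicklySyndetic S) {i : ℕ} (hi : 0 < i) :
    ThicklySyndetic {n | i * n ∈ S} := by
  intro k
  obtain ⟨L, hL, hA⟩ := hS (i * k + i)
  refine ⟨L + 1, by omega, fun n => ?_⟩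
  obtain ⟨m, hm, hnm, hmL⟩ := hA (i * n)
  -- `i * (q + 1)` is the first multiple of `i` beyond `m`
  set q := m / i
  have hqm : i * q ≤ m := Nat.mul_div_le m i
  have hmq : m < i * q + i := by simpa [Nat.mul_add] using Nat.lt_mul_div_succ m hi
  refine ⟨q + 1, fun j hj => ?_, ?_, ?_⟩
  · have hij : i * j ≤ i * k := Nat.mul_le_mul_left i hj
    have := hm (i * q + i + i * j - m) (by omega)
    rwa [show m + (i * q + i + i * j - m) = i * (q + 1 + j) by rw [Nat.mul_add, Nat.mul_add]; omega]
      at this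
  · exact (Nat.lt_of_mul_lt_mul_left (show i * n < i * (q + 1) by rw [Nat.mul_add]; omega)).le
  · have hLi : L ≤ i * L := Nat.le_mul_of_pos_left L hi
    have : q ≤ n + L := Nat.le_of_mul_le_mul_left (by rw [Nat.mul_add]; omega) hi
    omega

end ThicklySyndetic

theorem thicklySyndetic_Ioi_zero : ThicklySyndetic (Ioi 0) :=
  fun _ => ⟨1, one_pos, fun n => ⟨n + 1, fun j _ => by simp only [mem_Ioi]; omega, by omega, le_rfl⟩⟩

theorem ThicklySyndetic.biInter {ι : Type*} {s : Finset ι} {S : ι → Set ℕ}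
    (h : ∀ i ∈ s, ThicklySyndetic (S i)) : ThicklySyndetic (⋂ i ∈ s, S i) := by
  classical
  induction s using Finset.induction_on with
  | empty => simpa using thicklySyndetic_Ioi_zero.mono (subset_univ _)
  | insert i s _ ih =>
    rw [Finset.set_biInter_insert]
    exact (h i (s.mem_insert_self i)).inter (ih fun j hj => h j (Finset.mem_insert_of_mem hj))

theorem ThicklySyndetic.iInter {ι : Type*} [Finite ι] {S : ι → Set ℕ}
    (h : ∀ i, ThicklySyndetic (S i)) : ThicklySyndetic (⋂ i, S i) := by
  cases nonempty_fintype ι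
  simpa using ThicklySyndetic.biInter (s := Finset.univ) fun i _ => h i

end SyndeticSets

section NSet

variable {X Y : Type*}

theorem nSet_mono {f : X → X} {U U' V V' : Set X} (hU : U ⊆ U') (hV : V ⊆ V') :
    NSet f U V ⊆ NSet f U' V' :=
  fun _ ⟨hn, hne⟩ => ⟨hn, hne.mono (inter_subset_inter (image_mono hU) hV)⟩

theorem nSet_prodMap (f : X → X) (g : Y → Y) (U V : Set X) (U' V' : Set Y) :
    NSet (Prod.map f g) (U ×ˢ U') (V ×ˢ V') = NSet f U V ∩ NSet g U' V' := by
  ext n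
  simp only [NSet, mem_ofPred_eq, mem_inter_iff, Prod.map_iterate, prodMap_image_prod,
    prod_inter_prod, prod_nonempty_iff]
  tauto

theorem nSet_piMap {ι : Type*} {X : ι → Type*} (f : ∀ i, X i → X i) (U V : ∀ i, Set (X i)) :
    NSet (Pi.map f) (univ.pi U) (univ.pi V) = Ioi 0 ∩ ⋂ i, NSet (f i) (U i) (V i) := by
  ext n
  simp only [NSet, mem_ofPred_eq, mem_inter_iff, mem_iInter, mem_Ioi, Pi.map_iterate,
    piMap_image_univ_pi, ← pi_inter_distrib, univ_pi_nonempty_iff]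
  constructor
  · exact fun ⟨hn, h⟩ => ⟨hn, fun i => ⟨hn, h i⟩⟩
  · exact fun ⟨hn, h⟩ => ⟨hn, fun i => (h i).2⟩

theorem nSet_iterate (f : X → X) {k : ℕ} (hk : 0 < k) (U V : Set X) :
    NSet f^[k] U V = {n | k * n ∈ NSet f U V} := by
  ext n
  simp only [NSet, mem_ofPred_eq, ← iterate_mul, Nat.mul_pos_iff_of_pos_left hk]

theorem add_mem_nSet_of_mem_nSet_preimage {f : X → X} {U V : Set X} {n j : ℕ}
    (h : n ∈ NSet f U (f^[j] ⁻¹' V)) : n + j ∈ NSet f U V := by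
  obtain ⟨hn, _, ⟨x, hx, rfl⟩, hxV⟩ := h
  refine ⟨by omega, f^[n + j] x, mem_image_of_mem _ hx, ?_⟩
  rwa [add_comm, iterate_add_apply]

end NSet

section Transitivity

variable {X : Type*} [TopologicalSpace X] {f : X → X}

theorem SyndeticallyTransitive.topTransitive (h : SyndeticallyTransitive f) : TopTransitive f :=
  fun U V hU hV hUne hVne => (h U V hU hV hUne hVne).nonempty

theorem TopTransitive.denseRange (h : TopTransitive f) : DenseRange f := by
  refine dense_iff_inter_open.mpr fun V hV hVne => ?_
  obtain ⟨n, hn, _, ⟨x, -, rfl⟩, hxV⟩ :=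
    h univ V isOpen_univ hV ⟨hVne.some, trivial⟩ hVne
  obtain ⟨k, rfl⟩ := Nat.exists_eq_succ_of_ne_zero hn.ne'
  exact ⟨_, hxV, f^[k] x, (iterate_succ_apply' f k x).symm⟩

theorem DenseRange.iterate (hd : DenseRange f) (hf : Continuous f) (n : ℕ) :
    DenseRange f^[n] := by
  induction n with
  | zero => exact denseRange_id
  | succ n ih => rw [iterate_succ']; exact hd.comp ih hf

theorem WeaklyMixing.exists_nSet_subset_inter (hwm : WeaklyMixing f) (hf : Continuous f)
    {U₁ V₁ U₂ V₂ : Set X} (hU₁ : IsOpen U₁) (hV₁ : IsOpen V₁) (hU₂ : IsOpen U₂)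
    (hV₂ : IsOpen V₂) (hU₁ne : U₁.Nonempty) (hV₁ne : V₁.Nonempty) (hU₂ne : U₂.Nonempty)
    (hV₂ne : V₂.Nonempty) :
    ∃ U V : Set X, IsOpen U ∧ IsOpen V ∧ U.Nonempty ∧ V.Nonempty ∧
      NSet f U V ⊆ NSet f U₁ V₁ ∩ NSet f U₂ V₂ := by
  obtain ⟨n, hn, hne⟩ := hwm _ _ (hU₁.prod hV₁) (hU₂.prod hV₂) (hU₁ne.prod hV₁ne) (hU₂ne.prod hV₂ne)
  obtain ⟨⟨-, hUne⟩, ⟨-, hVne⟩⟩ :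
      n ∈ NSet f U₁ U₂ ∩ NSet f V₁ V₂ := nSet_prodMap f f U₁ U₂ V₁ V₂ ▸ ⟨hn, hne⟩
  rw [image_inter_nonempty_iff] at hUne hVne
  refine ⟨U₁ ∩ f^[n] ⁻¹' U₂, V₁ ∩ f^[n] ⁻¹' V₂, hU₁.inter ((hf.iterate n).isOpen_preimage _ hU₂),
    hV₁.inter ((hf.iterate n).isOpen_preimage _ hV₂), hUne, hVne, ?_⟩
  rintro m ⟨hm, _, ⟨x, ⟨hxU₁, hxU₂⟩, rfl⟩, hxV₁, hxV₂⟩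
  refine ⟨⟨hm, _, mem_image_of_mem _ hxU₁, hxV₁⟩, hm, _, mem_image_of_mem _ hxU₂, ?_⟩
  rwa [mem_preimage, ← iterate_add_apply, add_comm, iterate_add_apply] at hxV₂

theorem WeaklyMixing.exists_nSet_subset_nSet_preimage (hwm : WeaklyMixing f) (hf : Continuous f)
    (hd : DenseRange f) {U V : Set X} (hU : IsOpen U) (hV : IsOpen V) (hUne : U.Nonempty)
    (hVne : V.Nonempty) (k : ℕ) :
    ∃ U' V' : Set X, IsOpen U' ∧ IsOpen V' ∧ U'.Nonempty ∧ V'.Nonempty ∧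
      ∀ j ≤ k, NSet f U' V' ⊆ NSet f U (f^[j] ⁻¹' V) := by
  induction k with
  | zero =>
    refine ⟨U, V, hU, hV, hUne, hVne, fun j hj => ?_⟩
    rw [Nat.le_zero.mp hj, iterate_zero, preimage_id]
  | succ k ih =>
    obtain ⟨U', V', hU', hV', hU'ne, hV'ne, hsub⟩ := ih
    have hVk : IsOpen (f^[k + 1] ⁻¹' V) := (hf.iterate _).isOpen_preimage _ hV
    obtain ⟨U'', V'', hU'', hV'', hU''ne, hV''ne, hsub'⟩ := hwm.exists_nSet_subset_inter hf
      hU' hV' hU hVk hU'ne hV'ne hUne ((hd.iterate hf _).exists_mem_open hV hVne)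
    refine ⟨U'', V'', hU'', hV'', hU''ne, hV''ne, fun j hj n hn => ?_⟩
    rcases Nat.le_succ_iff.mp hj with hj | rfl
    · exact hsub j hj (hsub' hn).1
    · exact (hsub' hn).2

theorem WeaklyMixing.thicklySyndeticallyTransitive (hwm : WeaklyMixing f) (hf : Continuous f)
    (hsyn : SyndeticallyTransitive f) : ThicklySyndeticallyTransitive f := by
  intro U V hU hV hUne hVne k
  obtain ⟨U', V', hU', hV', hU'ne, hV'ne, hsub⟩ := hwm.exists_nSet_subset_nSet_preimage hf
    hsyn.topTransitive.denseRange hU hV hUne hVne k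
  exact (hsyn U' V' hU' hV' hU'ne hV'ne).mono fun n hn j hj =>
    add_mem_nSet_of_mem_nSet_preimage (hsub j hj hn)

end Transitivity

namespace ThicklySyndeticallyTransitive

variable {X Y : Type*} [TopologicalSpace X] [TopologicalSpace Y]

theorem syndeticallyTransitive {f : X → X} (h : ThicklySyndeticallyTransitive f) :
    SyndeticallyTransitive f :=
  fun U V hU hV hUne hVne => (h U V hU hV hUne hVne).syndetic

theorem iterate {f : X → X} (h : ThicklySyndeticallyTransitive f) {k : ℕ} (hk : 0 < k) :
    ThicklySyndeticallyTransitive f^[k] := by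
  intro U V hU hV hUne hVne
  rw [nSet_iterate f hk]
  exact (h U V hU hV hUne hVne).preimage_mul_left hk

theorem prodMap {f : X → X} {g : Y → Y} (hf : ThicklySyndeticallyTransitive f)
    (hg : ThicklySyndeticallyTransitive g) : ThicklySyndeticallyTransitive (Prod.map f g) := by
  rintro W W' hW hW' ⟨⟨a, b⟩, hab⟩ ⟨⟨c, d⟩, hcd⟩
  obtain ⟨U, U', hU, hU', ha, hb, hUW⟩ := isOpen_prod_iff.mp hW a b hab
  obtain ⟨V, V', hV, hV', hc, hd, hVW⟩ := isOpen_prod_iff.mp hW' c d hcd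
  refine ((hf U V hU hV ⟨a, ha⟩ ⟨c, hc⟩).inter (hg U' V' hU' hV' ⟨b, hb⟩ ⟨d, hd⟩)).mono ?_
  rw [← nSet_prodMap]
  exact nSet_mono hUW hVW

theorem piMap {ι : Type*} [Finite ι] {X : ι → Type*} [∀ i, TopologicalSpace (X i)]
    {f : ∀ i, X i → X i} (h : ∀ i, ThicklySyndeticallyTransitive (f i)) :
    ThicklySyndeticallyTransitive (Pi.map f) := by
  rintro W W' hW hW' ⟨a, ha⟩ ⟨c, hc⟩
  obtain ⟨U, hU, hUW⟩ := isOpen_pi_iff'.mp hW a ha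
  obtain ⟨V, hV, hVW⟩ := isOpen_pi_iff'.mp hW' c hc
  refine (thicklySyndetic_Ioi_zero.inter (ThicklySyndetic.iInter fun i =>
    h i _ _ (hU i).1 (hV i).1 ⟨_, (hU i).2⟩ ⟨_, (hV i).2⟩)).mono ?_
  rw [← nSet_piMap]
  exact nSet_mono hUW hVW

theorem weaklyMixing {f : X → X} (h : ThicklySyndeticallyTransitive f) : WeaklyMixing f :=
  (h.prodMap h).syndeticallyTransitive.topTransitive

end ThicklySyndeticallyTransitive

theorem statement1_general {X : Type*} [MetricSpace X] (f : X → X)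
    (hf : Continuous f) (hwm : WeaklyMixing f) (hsyn : SyndeticallyTransitive f) :
    (∀ m : ℕ, 1 ≤ m →
      WeaklyMixing (starMap f m) ∧ SyndeticallyTransitive (starMap f m)) ∧
    MultiTransitive f := by
  have hthick := hwm.thicklySyndeticallyTransitive hf hsyn
  have hstar (m : ℕ) : ThicklySyndeticallyTransitive (starMap f m) :=
    ThicklySyndeticallyTransitive.piMap fun i : Fin m => hthick.iterate (Nat.succ_pos i)
  exact ⟨fun m _ => ⟨(hstar m).weaklyMixing, (hstar m).syndeticallyTransitive⟩,
    fun m _ => (hstar m).syndeticallyTransitive.topTransitive⟩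

/-- If `f` is weakly mixing and syndetically transitive, then every
`f^{(∗m)} = f × f² × ⋯ × f^m` is weakly mixing and syndetically transitive; in particular
`f` is multi-transitive. -/
theorem statement1 {X : Type*} [MetricSpace X] [CompactSpace X] (f : X → X)
    (hf : Continuous f) (hwm : WeaklyMixing f) (hsyn : SyndeticallyTransitive f) :
    (∀ m : ℕ, 1 ≤ m →
      WeaklyMixing (starMap f m) ∧ SyndeticallyTransitive (starMap f m)) ∧
    MultiTransitive f :=
  statement1_general f hf hwm hsyn
end

section
/- Every minimal continuous map f : X → X on a compact metric space X is strongly transitive: for every nonempty open set U ⊆ X there is M > 0 such that ⋃_{j=1}^M f^j(U) = X. -/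
open Set Function

/-! Surjectivity of `f^[N+1]` turns "every orbit enters `U` within `N` steps" into
"`f(U), …, f^{N+1}(U)` cover `X`"; the former holds because the closed invariant set of
points whose orbits avoid `U` must be empty by minimality, and compactness bounds the
entrance time uniformly. -/

namespace MinimalMap

variable {X : Type*} [TopologicalSpace X] {f : X → X}

theorem surjective [CompactSpace X] [T2Space X] (hmin : MinimalMap f) (hf : Continuous f) :
    Surjective f := by
  rcases isEmpty_or_nonempty X with _ | ⟨⟨x⟩⟩
  · exact fun y => isEmptyElim y
  have hrange : range f = univ :=
    hmin _ (isCompact_range hf).isClosed ⟨f x, mem_range_self x⟩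
      (image_subset_iff.2 fun y _ => mem_range_self y)
  exact range_eq_univ.1 hrange

theorem exists_iterate_mem (hmin : MinimalMap f) (hf : Continuous f) {U : Set X}
    (hU : IsOpen U) (hUne : U.Nonempty) (x : X) : ∃ n, f^[n] x ∈ U := by
  by_contra! hx
  set K : Set X := ⋂ n, f^[n] ⁻¹' Uᶜ
  have hK : IsClosed K := isClosed_iInter fun n => hU.isClosed_compl.preimage (hf.iterate n)
  have hKinv : f '' K ⊆ K := by
    rintro _ ⟨y, hy, rfl⟩
    simp only [K, mem_iInter] at hy ⊢
    intro n
    simpa only [mem_preimage, iterate_succ_apply] using hy (n + 1)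
  obtain ⟨u, hu⟩ := hUne
  have hKuniv := hmin K hK ⟨x, mem_iInter.2 hx⟩ hKinv
  exact mem_iInter.1 (hKuniv ▸ mem_univ u : u ∈ K) 0 hu

theorem exists_bound_iterate_mem [CompactSpace X] (hmin : MinimalMap f) (hf : Continuous f)
    {U : Set X} (hU : IsOpen U) (hUne : U.Nonempty) : ∃ N, ∀ x, ∃ n ≤ N, f^[n] x ∈ U := by
  obtain ⟨s, hs⟩ := isCompact_univ.elim_finite_subcover (fun n => f^[n] ⁻¹' U)
    (fun n => hU.preimage (hf.iterate n))
    (fun x _ => mem_iUnion.2 (hmin.exists_iterate_mem hf hU hUne x))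
  refine ⟨s.sup id, fun x => ?_⟩
  obtain ⟨n, hns, hn⟩ := mem_iUnion₂.1 (hs (mem_univ x))
  exact ⟨n, Finset.le_sup (f := id) hns, hn⟩

end MinimalMap

theorem iUnion_iterate_image_eq_univ_of_surjective {X : Type*} {f : X → X} (hf : Surjective f)
    {U : Set X} {N : ℕ} (hN : ∀ x, ∃ n ≤ N, f^[n] x ∈ U) :
    (⋃ j ∈ Finset.Icc 1 (N + 1), f^[j] '' U) = univ := by
  refine eq_univ_of_forall fun y => ?_
  obtain ⟨z, rfl⟩ := hf.iterate (N + 1) y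
  obtain ⟨n, hnN, hn⟩ := hN z
  refine mem_biUnion (x := N + 1 - n) (Finset.mem_Icc.2 ⟨by omega, by omega⟩) ⟨f^[n] z, hn, ?_⟩
  rw [← iterate_add_apply, Nat.sub_add_cancel (Nat.le_succ_of_le hnN)]

/-- Every minimal continuous map on a compact metric space is strongly
transitive. -/
theorem statement6 {X : Type*} [MetricSpace X] [CompactSpace X] (f : X → X)
    (hf : Continuous f) (hmin : MinimalMap f) :
    StronglyTransitive f := by
  intro U hU hUne
  obtain ⟨N, hN⟩ := hmin.exists_bound_iterate_mem hf hU hUne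
  exact ⟨N + 1, N.succ_pos, iUnion_iterate_image_eq_univ_of_surjective
    (hmin.surjective hf) hN⟩
end

section
/- Every strongly transitive continuous map f : X → X on a compact metric space X is syndetically transitive: for all nonempty open sets U, V ⊆ X the set N(U,V;f) = {n > 0 : f^n(U) ∩ V ≠ ∅} is syndetic. -/
open Set Function

/-! Strong transitivity applied to `univ` makes `f` surjective. Given `n`, pull a point of `V`
back `n` steps; the preimage lies in some `f^j(U)` with `1 ≤ j ≤ M`, so `n + j ∈ N(U,V;f)`. -/

theorem StronglyTransitive.surjective {X : Type*} [TopologicalSpace X] [Nonempty X] {f : X → X}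
    (hst : StronglyTransitive f) : Surjective f := by
  intro y
  obtain ⟨M, -, hcov⟩ := hst univ isOpen_univ univ_nonempty
  have hy : y ∈ ⋃ j ∈ Finset.Icc 1 M, f^[j] '' univ := by rw [hcov]; exact mem_univ y
  simp only [mem_iUnion, Finset.mem_Icc] at hy
  obtain ⟨j, ⟨hj, -⟩, x, -, rfl⟩ := hy
  obtain ⟨i, rfl⟩ := Nat.exists_eq_add_of_le' hj
  exact ⟨f^[i] x, (iterate_succ_apply' f i x).symm⟩

theorem syndetic_nSet_of_iUnion_iterate_image_eq_univ {X : Type*} {f : X → X} {U V : Set X}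
    {M : ℕ} (hsurj : Surjective f) (hM : 0 < M)
    (hcov : ⋃ j ∈ Finset.Icc 1 M, f^[j] '' U = univ) (hV : V.Nonempty) :
    Syndetic (NSet f U V) := by
  obtain ⟨v, hv⟩ := hV
  refine ⟨M, hM, fun n => ?_⟩
  obtain ⟨w, rfl⟩ := hsurj.iterate n v
  have hw : w ∈ ⋃ j ∈ Finset.Icc 1 M, f^[j] '' U := by rw [hcov]; exact mem_univ w
  simp only [mem_iUnion, Finset.mem_Icc] at hw
  obtain ⟨j, ⟨hj, hjM⟩, u, hu, rfl⟩ := hw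
  have hnj : f^[n + j] u = f^[n] (f^[j] u) := iterate_add_apply f n j u
  exact ⟨n + j, ⟨by omega, f^[n] (f^[j] u), ⟨u, hu, hnj⟩, hv⟩, by omega, by omega⟩

theorem statement7_general {X : Type*} [MetricSpace X] (f : X → X)
    (hst : StronglyTransitive f) :
    SyndeticallyTransitive f := by
  intro U V hU _ hUne hVne
  have : Nonempty X := ⟨hUne.some⟩
  obtain ⟨M, hM, hcov⟩ := hst U hU hUne
  exact syndetic_nSet_of_iUnion_iterate_image_eq_univ hst.surjective hM hcov hVne

/-- Every strongly transitive continuous map on a compact metric space is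
syndetically transitive. -/
theorem statement7 {X : Type*} [MetricSpace X] [CompactSpace X] (f : X → X)
    (hf : Continuous f) (hst : StronglyTransitive f) :
    SyndeticallyTransitive f :=
  statement7_general f hst
end

section
/- Let M ≥ 3 and N ≥ 1 be integers and let A ⊆ ℕ be a finite M-dispersed set. Then there exists a finite M-dispersed set B ⊆ ℕ with A ⊆ B such that, setting k = max A + 1, for every pair of sequences of words u₁, …, u_N and v₁, …, v_N in L_k(Σ_B) there is n ≥ 0 such that σ^{i·n}([u_i]_B) ∩ [v_i]_B ≠ ∅ for every i = 1, …, N. -/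
open Set Function

/-- The spacing shift `Σ_P ⊆ {0,1}^ℕ`: all sequences such that whenever two distinct
positions carry the symbol `1`, the distance between them lies in `P`. -/
def SpacingSubshift (P : Set ℕ) : Set (ℕ → Bool) :=
  {x | ∀ i j : ℕ, i < j → x i = true → x j = true → j - i ∈ P}

theorem shift_mem_spacingSubshift {P : Set ℕ} {x : ℕ → Bool}
    (hx : x ∈ SpacingSubshift P) : (fun n => x (n + 1)) ∈ SpacingSubshift P := by
  intro i j hij hi hj
  have h := hx (i + 1) (j + 1) (by omega) hi hj
  have : j + 1 - (i + 1) = j - i := by omega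
  rwa [this] at h

/-- The shift map `σ_P : Σ_P → Σ_P` of the spacing shift. -/
def sigmaP (P : Set ℕ) : SpacingSubshift P → SpacingSubshift P :=
  fun x => ⟨fun n => x.1 (n + 1), shift_mem_spacingSubshift x.2⟩

/-- The cylinder `[1]_P` of points of `Σ_P` whose 0th coordinate is `1`. -/
def oneCyl (P : Set ℕ) : Set (SpacingSubshift P) := {x | x.1 0 = true}

/-- A set `P ⊆ ℕ` is thick if it contains arbitrarily long intervals of
consecutive integers. -/
def Thick (P : Set ℕ) : Prop :=
  ∀ n : ℕ, ∃ k : ℕ, Set.Ico k (k + n) ⊆ P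

/-- `P(m) = ⋃_{k ≥ 1} {m^{2k-1}, …, m^{2k} - 1}`. -/
def ProgressionSet (m : ℕ) : Set ℕ :=
  {n | ∃ k : ℕ, 1 ≤ k ∧ m ^ (2 * k - 1) ≤ n ∧ n < m ^ (2 * k)}

/-- A word `w` of length `k` is `P`-admissible if `Sp(w) ⊆ P`, i.e. whenever two distinct
positions of `w` carry the symbol `1`, their distance lies in `P`. -/
def AdmissibleWord (P : Set ℕ) {k : ℕ} (w : Fin k → Bool) : Prop :=
  ∀ i j : Fin k, (i : ℕ) < (j : ℕ) → w i = true → w j = true → (j : ℕ) - (i : ℕ) ∈ P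

/-- The cylinder `[w]_P ⊆ Σ_P` of all points in which the word `w` appears at position 0. -/
def cylP (P : Set ℕ) {k : ℕ} (w : Fin k → Bool) : Set (SpacingSubshift P) :=
  {x | ∀ i : Fin k, x.1 (i : ℕ) = w i}

/-- A finite set `S ⊆ ℕ` is `q`-dispersed if `|a - b| ≥ q` for all distinct
`a, b ∈ S ∪ {0}`. -/
def Dispersed (q : ℕ) (S : Finset ℕ) : Prop :=
  ∀ a ∈ insert 0 S, ∀ b ∈ insert 0 S, a < b → q ≤ b - a

/-!
For every tuple `t = (u, v)` of `A`-admissible words of length `k` we reserve a basepoint `n_t`, and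
put into `B` all distances `(i+1) n_t + q - p` with `u_i p = v_i q = 1`; then the point carrying
`u_i` at `0` and `v_i` at `(i+1) n_t` lies in `Σ_B`. The new distances are at least `k`, so
`B`-admissible words of length `k` are still `A`-admissible. Taking `n_t = Q (N+1)^{e(t)}` for an enumeration `e` makes the
centres `(i+1) n_t` distinct multiples of `Q`, so for `Q` large the new distances form blocks that
are far from each other and from `A`. Within one block two distances differ by a difference of two
elements of `{0} ∪ A`, which is `0` or at least `M`.
-/

def SpacedBy (M : ℕ) (S : Finset ℕ) : Prop :=
  ∀ a ∈ S, ∀ b ∈ S, a < b → M ≤ b - a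

theorem dispersed_iff_spacedBy {M : ℕ} {A : Finset ℕ} :
    Dispersed M A ↔ SpacedBy M (insert 0 A) :=
  Iff.rfl

theorem SpacedBy.union {M : ℕ} {S T : Finset ℕ} (hS : SpacedBy M S) (hT : SpacedBy M T)
    (hST : ∀ a ∈ S, ∀ b ∈ T, a + M ≤ b) : SpacedBy M (S ∪ T) := by
  intro a ha b hb hab
  rcases Finset.mem_union.1 ha with ha | ha <;> rcases Finset.mem_union.1 hb with hb | hb
  · exact hS a ha b hb hab
  · have := hST a ha b hb; omega
  · have := hST b hb a ha; omega
  · exact hT a ha b hb hab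

theorem spacedBy_biUnion {ι : Type*} {M r : ℕ} {s : Finset ι} {S : ι → Finset ℕ} {c : ι → ℕ}
    (hS : ∀ j ∈ s, SpacedBy M (S j)) (hnear : ∀ j ∈ s, ∀ x ∈ S j, Nat.dist x (c j) ≤ r)
    (hfar : ∀ j ∈ s, ∀ j' ∈ s, j ≠ j' → 2 * r + M ≤ Nat.dist (c j) (c j')) :
    SpacedBy M (s.biUnion S) := by
  intro a ha b hb hab
  obtain ⟨j, hj, ha⟩ := Finset.mem_biUnion.1 ha
  obtain ⟨j', hj', hb⟩ := Finset.mem_biUnion.1 hb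
  by_cases hjj : j = j'
  · subst hjj
    exact hS j hj a ha b hb hab
  · have := hnear j hj a ha
    have := hnear j' hj' b hb
    have := hfar j hj j' hj' hjj
    simp only [Nat.dist] at *
    omega

theorem le_dist_of_ne_of_dvd {Q a b : ℕ} (hab : a ≠ b) (ha : Q ∣ a) (hb : Q ∣ b) :
    Q ≤ Nat.dist a b := by
  obtain ⟨a, rfl⟩ := ha
  obtain ⟨b, rfl⟩ := hb
  have : a ≠ b := by rintro rfl; exact hab rfl
  rcases Nat.lt_or_gt_of_ne this with h | h <;>
  · have := Nat.mul_le_mul_left Q h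
    simp only [Nat.dist, Nat.mul_succ] at *
    omega

theorem mul_pow_injective {b d d' e e' : ℕ} (hd : 0 < d) (hd' : 0 < d') (hdb : d < b)
    (hdb' : d' < b) (h : d * b ^ e = d' * b ^ e') : d = d' ∧ e = e' := by
  wlog hee : e ≤ e' generalizing d d' e e'
  · obtain ⟨h₁, h₂⟩ := this hd' hd hdb' hdb h.symm (by omega)
    exact ⟨h₁.symm, h₂.symm⟩
  obtain ⟨m, rfl⟩ := Nat.exists_eq_add_of_le hee
  have hquot : d = d' * b ^ m := by
    rw [pow_add, mul_comm (b ^ e), ← mul_assoc] at h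
    exact Nat.eq_of_mul_eq_mul_right (pow_pos (by omega : 0 < b) e) h
  rcases m with _ | m
  · simpa using hquot
  · have : b ≤ d' * b ^ (m + 1) :=
      le_mul_of_one_le_of_le hd' (Nat.le_self_pow (by omega) b)
    omega

theorem AdmissibleWord.mono_of_lt {P P' : Set ℕ} {k : ℕ} {w : Fin k → Bool}
    (hw : AdmissibleWord P w) (h : ∀ d ∈ P, d < k → d ∈ P') : AdmissibleWord P' w :=
  fun i j hij hi hj => h _ (hw i j hij hi hj) (by omega)

theorem AdmissibleWord.dist_mem {A : Finset ℕ} {k : ℕ} {w : Fin k → Bool}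
    (hw : AdmissibleWord (↑A) w) {p p' : Fin k} (hp : w p = true) (hp' : w p' = true) :
    Nat.dist p p' ∈ insert 0 A := by
  rcases lt_trichotomy (p : ℕ) p' with h | h | h
  · have := hw p p' h hp hp'
    rw [Nat.dist, Nat.sub_eq_zero_of_le h.le, zero_add]
    exact Finset.mem_insert_of_mem this
  · simp [h]
  · have := hw p' p h hp' hp
    rw [Nat.dist, Nat.sub_eq_zero_of_le h.le, add_zero]
    exact Finset.mem_insert_of_mem this

theorem sigmaP_iterate_apply {P : Set ℕ} (x : SpacingSubshift P) (n m : ℕ) :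
    ((sigmaP P)^[n] x).1 m = x.1 (m + n) := by
  induction n generalizing x with
  | zero => rfl
  | succ n ih => rw [Function.iterate_succ_apply, ih]; rfl

def glue {k : ℕ} (c : ℕ) (u v : Fin k → Bool) : ℕ → Bool := fun m =>
  if h : m < k then u ⟨m, h⟩
  else if h' : c ≤ m ∧ m - c < k then v ⟨m - c, h'.2⟩
  else false

theorem glue_eq_true {k c m : ℕ} {u v : Fin k → Bool} (h : glue c u v m = true) :
    (∃ hm : m < k, u ⟨m, hm⟩ = true) ∨ (c ≤ m ∧ ∃ hm : m - c < k, v ⟨m - c, hm⟩ = true) := by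
  unfold glue at h
  split_ifs at h with h₁ h₂
  exacts [Or.inl ⟨h₁, h⟩, Or.inr ⟨h₂.1, h₂.2, h⟩]

def crossDistances {k : ℕ} (c : ℕ) (u v : Fin k → Bool) : Finset ℕ :=
  ((Finset.univ.filter (u · = true)) ×ˢ (Finset.univ.filter (v · = true))).image
    fun pq => c + pq.2 - pq.1

theorem mem_crossDistances {k c x : ℕ} {u v : Fin k → Bool} :
    x ∈ crossDistances c u v ↔ ∃ p q, u p = true ∧ v q = true ∧ c + q - p = x := by
  simp [crossDistances, and_assoc]

theorem glue_mem_spacingSubshift {P : Set ℕ} {k c : ℕ} {u v : Fin k → Bool}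
    (hu : AdmissibleWord P u) (hv : AdmissibleWord P v) (hkc : k ≤ c)
    (hcross : ↑(crossDistances c u v) ⊆ P) : glue c u v ∈ SpacingSubshift P := by
  intro i j hij hi hj
  rcases glue_eq_true hi with ⟨hi, hui⟩ | ⟨hci, hi, hvi⟩ <;>
    rcases glue_eq_true hj with ⟨hj, huj⟩ | ⟨hcj, hj, hvj⟩
  · exact hu ⟨i, hi⟩ ⟨j, hj⟩ hij hui huj
  · convert hcross (mem_crossDistances.2 ⟨_, _, hui, hvj, rfl⟩) using 1
    simp only
    omega
  · omega
  · convert hv ⟨i - c, hi⟩ ⟨j - c, hj⟩ (by simp only; omega) hvi hvj using 1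
    simp only
    omega

theorem iterate_sigmaP_image_cylP_inter_nonempty {P : Set ℕ} {k c : ℕ} {u v : Fin k → Bool}
    (hu : AdmissibleWord P u) (hv : AdmissibleWord P v) (hkc : k ≤ c)
    (hcross : ↑(crossDistances c u v) ⊆ P) :
    ((sigmaP P)^[c] '' cylP P u ∩ cylP P v).Nonempty := by
  set x : SpacingSubshift P := ⟨glue c u v, glue_mem_spacingSubshift hu hv hkc hcross⟩
  refine ⟨_, ⟨x, fun m => dif_pos m.2, rfl⟩, fun m => ?_⟩
  rw [sigmaP_iterate_apply]
  simp only [x, glue, dif_neg (show ¬(m + c < k) by omega), Nat.add_sub_cancel,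
    le_add_iff_nonneg_left, zero_le, m.2, and_self, dif_pos]

theorem Dispersed.spacedBy_crossDistances {M k c : ℕ} {A : Finset ℕ} (hA : Dispersed M A)
    {u v : Fin k → Bool} (hu : AdmissibleWord (↑A) u) (hv : AdmissibleWord (↑A) v)
    (hkc : k ≤ c) : SpacedBy M (crossDistances c u v) := by
  intro x hx y hy hxy
  obtain ⟨p, q, hp, hq, rfl⟩ := mem_crossDistances.1 hx
  obtain ⟨p', q', hp', hq', rfl⟩ := mem_crossDistances.1 hy
  -- `y - x` is `±α ± β` with `α, β ∈ {0} ∪ A`, which is `M`-spaced.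
  have hα := hv.dist_mem hq hq'
  have hβ := hu.dist_mem hp hp'
  have h₁ := hA 0 (Finset.mem_insert_self 0 A) _ hα
  have h₂ := hA 0 (Finset.mem_insert_self 0 A) _ hβ
  have h₃ := hA _ hα _ hβ
  have h₄ := hA _ hβ _ hα
  have := p.2; have := p'.2
  simp only [Nat.dist] at *
  omega

section ConnectingSet

variable (A : Finset ℕ) (N k Q : ℕ)

abbrev WordTuples : Type := (Fin N → Fin k → Bool) × (Fin N → Fin k → Bool)

noncomputable def basepoint (t : WordTuples N k) : ℕ :=
  Q * (N + 1) ^ (Fintype.equivFin (WordTuples N k) t : ℕ)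

open Classical in
noncomputable def connectingSet : Finset ℕ :=
  A ∪ ((Finset.univ.filter fun t : WordTuples N k =>
        ∀ i, AdmissibleWord (↑A) (t.1 i) ∧ AdmissibleWord (↑A) (t.2 i)) ×ˢ
      (Finset.univ : Finset (Fin N))).biUnion fun ti =>
     crossDistances ((ti.2 + 1) * basepoint N k Q ti.1) (ti.1.1 ti.2) (ti.1.2 ti.2)

variable {A N k Q}

theorem subset_connectingSet : A ⊆ connectingSet A N k Q :=
  Finset.subset_union_left

theorem crossDistances_subset_connectingSet {t : WordTuples N k}
    (ht : ∀ i, AdmissibleWord (↑A) (t.1 i) ∧ AdmissibleWord (↑A) (t.2 i)) (i : Fin N) :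
    crossDistances ((i + 1) * basepoint N k Q t) (t.1 i) (t.2 i) ⊆ connectingSet A N k Q := by
  classical
  intro x hx
  refine Finset.mem_union_right _ (Finset.mem_biUnion.2 ⟨(t, i), ?_, hx⟩)
  simpa using ht

theorem le_mul_basepoint (t : WordTuples N k) (i : Fin N) :
    Q ≤ (i + 1) * basepoint N k Q t :=
  le_mul_of_one_le_of_le (by omega) (Nat.le_mul_of_pos_right Q (by positivity))

theorem mul_basepoint_injective (hQ : 0 < Q) {t t' : WordTuples N k} {i i' : Fin N}
    (h : (i + 1) * basepoint N k Q t = (i' + 1) * basepoint N k Q t') : t = t' ∧ i = i' := by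
  simp only [basepoint, mul_left_comm _ Q] at h
  obtain ⟨hi, he⟩ := mul_pow_injective (by omega) (by omega) (by omega) (by omega)
    (Nat.eq_of_mul_eq_mul_left hQ h)
  exact ⟨(Fintype.equivFin _).injective (Fin.ext he), Fin.ext (by omega)⟩

theorem dist_lt_of_mem_crossDistances {c x : ℕ} {u v : Fin k → Bool} (hx : x ∈ crossDistances c u v)
    (hkc : k ≤ c) : Nat.dist x c < k := by
  obtain ⟨p, q, -, -, rfl⟩ := mem_crossDistances.1 hx
  have := p.2; have := q.2
  simp only [Nat.dist]
  omega

theorem mem_of_mem_connectingSet_of_lt (hQ : 2 * k ≤ Q) {x : ℕ} (hx : x ∈ connectingSet A N k Q)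
    (hxk : x < k) : x ∈ A := by
  rcases Finset.mem_union.1 hx with hx | hx
  · exact hx
  · obtain ⟨⟨t, i⟩, -, hx⟩ := Finset.mem_biUnion.1 hx
    dsimp only at hx
    have := dist_lt_of_mem_crossDistances hx (by have := le_mul_basepoint (Q := Q) t i; omega)
    have := le_mul_basepoint (Q := Q) t i
    simp only [Nat.dist] at *
    omega

theorem dispersed_connectingSet {M : ℕ} (hA : Dispersed M A) (hk : 0 < k) (hAk : ∀ a ∈ A, a < k)
    (hQ : 2 * k + M ≤ Q) : Dispersed M (connectingSet A N k Q) := by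
  classical
  rw [dispersed_iff_spacedBy, connectingSet, ← Finset.insert_union]
  refine SpacedBy.union hA (spacedBy_biUnion (r := k)
    (c := fun ti => (ti.2 + 1) * basepoint N k Q ti.1) ?_ ?_ ?_) ?_
  · intro ti hti
    have ht := (Finset.mem_filter.1 (Finset.mem_product.1 hti).1).2
    exact hA.spacedBy_crossDistances (ht ti.2).1 (ht ti.2).2 (by
      have := le_mul_basepoint (Q := Q) ti.1 ti.2; omega)
  · rintro ti - x hx
    exact (dist_lt_of_mem_crossDistances hx (by have := le_mul_basepoint (Q := Q) ti.1 ti.2; omega)).le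
  · rintro ⟨t, i⟩ - ⟨t', i'⟩ - hne
    refine le_trans hQ (le_dist_of_ne_of_dvd (fun h => hne ?_)
      (dvd_mul_of_dvd_right (dvd_mul_right _ _) _) (dvd_mul_of_dvd_right (dvd_mul_right _ _) _))
    obtain ⟨rfl, rfl⟩ := mul_basepoint_injective (by omega) h
    rfl
  · intro a ha b hb
    obtain ⟨⟨t, i⟩, -, hb⟩ := Finset.mem_biUnion.1 hb
    dsimp only at hb
    have := le_mul_basepoint (Q := Q) t i
    have := dist_lt_of_mem_crossDistances hb (by omega)
    have : a < k := by
      rcases Finset.mem_insert.1 ha with rfl | ha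
      exacts [hk, hAk a ha]
    simp only [Nat.dist] at *
    omega

end ConnectingSet

theorem statement8_general (M N : ℕ) (A : Finset ℕ)
    (hA : Dispersed M A) :
    ∃ B : Finset ℕ, Dispersed M B ∧ A ⊆ B ∧
      ∀ u v : Fin N → (Fin (A.sup id + 1) → Bool),
        (∀ i, AdmissibleWord (↑B) (u i)) → (∀ i, AdmissibleWord (↑B) (v i)) →
          ∃ n : ℕ, ∀ i : Fin N,
            ((sigmaP ↑B)^[((i : ℕ) + 1) * n] '' cylP (↑B) (u i) ∩
              cylP (↑B) (v i)).Nonempty := by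
  set k := A.sup id + 1
  have hAk : ∀ a ∈ A, a < k := fun a ha => Nat.lt_succ_of_le (Finset.le_sup (f := id) ha)
  refine ⟨connectingSet A N k (2 * k + M), dispersed_connectingSet hA (by omega) hAk le_rfl,
    subset_connectingSet, fun u v hu hv => ⟨basepoint N k (2 * k + M) (u, v), fun i => ?_⟩⟩
  have hadm : ∀ i, AdmissibleWord (↑A) (u i) ∧ AdmissibleWord (↑A) (v i) := fun i =>
    ⟨(hu i).mono_of_lt fun d hd hdk => mem_of_mem_connectingSet_of_lt (by omega) hd hdk,
      (hv i).mono_of_lt fun d hd hdk => mem_of_mem_connectingSet_of_lt (by omega) hd hdk⟩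
  exact iterate_sigmaP_image_cylP_inter_nonempty (hu i) (hv i)
    (by have := le_mul_basepoint (Q := 2 * k + M) (u, v) i; omega)
    (crossDistances_subset_connectingSet hadm i)

/-- For integers `M ≥ 3`, `N ≥ 1` and a finite `M`-dispersed set `A ⊆ ℕ`
there is a finite `M`-dispersed set `B ⊇ A` such that, with `k = max A + 1`, for all words
`u₁, …, u_N, v₁, …, v_N ∈ L_k(Σ_B)` there is `n ≥ 0` with
`σ^{i·n}([u_i]_B) ∩ [v_i]_B ≠ ∅` for every `i = 1, …, N`. -/
theorem statement8 (M N : ℕ) (hM : 3 ≤ M) (hN : 1 ≤ N) (A : Finset ℕ)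
    (hA : Dispersed M A) :
    ∃ B : Finset ℕ, Dispersed M B ∧ A ⊆ B ∧
      ∀ u v : Fin N → (Fin (A.sup id + 1) → Bool),
        (∀ i, AdmissibleWord (↑B) (u i)) → (∀ i, AdmissibleWord (↑B) (v i)) →
          ∃ n : ℕ, ∀ i : Fin N,
            ((sigmaP ↑B)^[((i : ℕ) + 1) * n] '' cylP (↑B) (u i) ∩
              cylP (↑B) (v i)).Nonempty :=
  statement8_general M N A hA
end

section
/- Let m ≥ 2 and P = P(m) = ⋃_{k=1}^∞ {m^{2k−1}, m^{2k−1}+1, …, m^{2k}−1}. Then the map τ = σ_P × σ_P² × … × σ_P^{m−1} is topologically transitive, but τ × σ_P^m is not topologically transitive. In particular, the spacing shift σ_P is weakly mixing but not multi-transitive. -/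
open Set Function

/-!
Every open subset of `Σ_P` contains a cylinder, and two cylinders of length `L` can be joined
at time `k ≥ L` as soon as all `d` with `|d - k| < L` lie in `P`: write the first word at
position `0`, the second at position `k`, and zeros elsewhere. For `P = P(m)` the windows
around `t * (m ^ (2L+1) + L + 1)`, `1 ≤ t < m`, all lie in the block `[m ^ (2L+1), m ^ (2L+2))`,
so a single time serves `σ_P, σ_P², …, σ_P^{m-1}` at once. Conversely, if the cylinder `[1]`
returns to itself under `σ_P^n` and `σ_P^{mn}`, then `n ∈ P(m)` and `mn ∈ P(m)`, which is
impossible since multiplication by `m` sends each block of `P(m)` into the following gap.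
-/

open Filter Topology

theorem TopTransitive.of_semiconj {X Y : Type*} [TopologicalSpace X] [TopologicalSpace Y]
    {f : X → X} {g : Y → Y} {π : X → Y} (hf : TopTransitive f) (hπ : Continuous π)
    (hπs : Surjective π) (h : Semiconj π f g) : TopTransitive g := by
  intro U V hU hV hUne hVne
  obtain ⟨n, hn, _, ⟨x, hxU, rfl⟩, hxV⟩ := hf (π ⁻¹' U) (π ⁻¹' V) (hU.preimage hπ)
    (hV.preimage hπ) (hUne.preimage hπs) (hVne.preimage hπs)
  exact ⟨n, hn, π (f^[n] x), ⟨π x, hxU, ((h.iterate_right n).eq x).symm⟩, hxV⟩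

theorem Pi.map_iterate_iterate_apply {ι X : Type*} (f : X → X) (a : ι → ℕ) (n : ℕ)
    (x : ι → X) (i : ι) : (Pi.map fun i => f^[a i])^[n] x i = f^[a i * n] (x i) := by
  rw [Pi.map_iterate, Pi.map_apply, iterate_mul]

theorem PiNat.eventually_cylinder_subset {E : ℕ → Type*} [∀ n, TopologicalSpace (E n)]
    [∀ n, DiscreteTopology (E n)] {x : ∀ n, E n} {U : Set (∀ n, E n)} (hU : U ∈ 𝓝 x) :
    ∀ᶠ n in atTop, cylinder x n ⊆ U := by
  obtain ⟨_, ⟨y, n, rfl⟩, hxy, hyU⟩ := (isTopologicalBasis_cylinders E).mem_nhds_iff.1 hU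
  rw [← mem_cylinder_iff_eq.1 hxy] at hyU
  exact eventually_atTop.2 ⟨n, fun k hk => (cylinder_anti x hk).trans hyU⟩

theorem PiNat.eventually_preimage_cylinder_subset {E : ℕ → Type*}
    [∀ n, TopologicalSpace (E n)] [∀ n, DiscreteTopology (E n)] {S : Set (∀ n, E n)} {x : S}
    {U : Set S} (hU : U ∈ 𝓝 x) : ∀ᶠ n in atTop, Subtype.val ⁻¹' cylinder x.1 n ⊆ U := by
  obtain ⟨W, hW, hWU⟩ := (mem_nhds_subtype S x U).1 hU
  exact (eventually_cylinder_subset hW).mono fun n hn => (preimage_mono hn).trans hWU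

namespace SpacingSubshift

variable {P : Set ℕ}

theorem sigmaP_iterate_apply (n : ℕ) (x : SpacingSubshift P) (j : ℕ) :
    ((sigmaP P)^[n] x).1 j = x.1 (j + n) := by
  induction n generalizing x with
  | zero => rfl
  | succ n ih => rw [iterate_succ_apply, ih]; rfl

def splice (x y : ℕ → Bool) (L k : ℕ) : ℕ → Bool := fun j =>
  if j < L then x j else if k ≤ j ∧ j < k + L then y (j - k) else false

theorem splice_eq_true {x y : ℕ → Bool} {L k j : ℕ} (h : splice x y L k j = true) :
    (j < L ∧ x j = true) ∨ (k ≤ j ∧ j < k + L ∧ y (j - k) = true) := by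
  unfold splice at h
  split_ifs at h with h₁ h₂
  exacts [.inl ⟨h₁, h⟩, .inr ⟨h₂.1, h₂.2, h⟩]

theorem splice_mem {x y : ℕ → Bool} (hx : x ∈ SpacingSubshift P) (hy : y ∈ SpacingSubshift P)
    {L k : ℕ} (hLk : L ≤ k) (hP : Ioo (k - L) (k + L) ⊆ P) :
    splice x y L k ∈ SpacingSubshift P := by
  intro i j hij hi hj
  rcases splice_eq_true hi with ⟨hiL, hi⟩ | ⟨hki, hiL, hi⟩ <;>
    rcases splice_eq_true hj with ⟨hjL, hj⟩ | ⟨hkj, hjL, hj⟩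
  · exact hx i j hij hi hj
  · exact hP ⟨by omega, by omega⟩
  · omega
  · have := hy (i - k) (j - k) (by omega) hi hj
    rwa [show j - k - (i - k) = j - i by omega] at this

theorem exists_mem_cylinder_iterate_mem_cylinder {L k : ℕ} (hLk : L ≤ k)
    (hP : Ioo (k - L) (k + L) ⊆ P) (u v : SpacingSubshift P) :
    ∃ z : SpacingSubshift P,
      z.1 ∈ PiNat.cylinder u.1 L ∧ ((sigmaP P)^[k] z).1 ∈ PiNat.cylinder v.1 L := by
  refine ⟨⟨splice u.1 v.1 L k, splice_mem u.2 v.2 hLk hP⟩, fun j hj => if_pos hj, fun j hj => ?_⟩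
  rw [sigmaP_iterate_apply]
  change splice u.1 v.1 L k (j + k) = v.1 j
  rw [splice, if_neg (by omega), if_pos ⟨by omega, by omega⟩, Nat.add_sub_cancel]

theorem topTransitive_piMap {ι : Type*} [Finite ι] (a : ι → ℕ)
    (h : ∀ L, ∃ n, 0 < n ∧ ∀ i, L ≤ a i * n ∧ Ioo (a i * n - L) (a i * n + L) ⊆ P) :
    TopTransitive (Pi.map fun i => (sigmaP P)^[a i]) := by
  intro U V hU hV ⟨u, hu⟩ ⟨v, hv⟩
  obtain ⟨s, hs, hsU⟩ := isOpen_pi_iff'.1 hU u hu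
  obtain ⟨t, ht, htV⟩ := isOpen_pi_iff'.1 hV v hv
  have hcyl : ∀ᶠ L in atTop, ∀ i, Subtype.val ⁻¹' PiNat.cylinder (u i).1 L ⊆ s i ∧
      Subtype.val ⁻¹' PiNat.cylinder (v i).1 L ⊆ t i :=
    eventually_all.2 fun i => (PiNat.eventually_preimage_cylinder_subset
      ((hs i).1.mem_nhds (hs i).2)).and
      (PiNat.eventually_preimage_cylinder_subset ((ht i).1.mem_nhds (ht i).2))
  obtain ⟨L, hL⟩ := hcyl.exists
  obtain ⟨n, hn, hwin⟩ := h L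
  choose z hzu hzv using fun i =>
    exists_mem_cylinder_iterate_mem_cylinder (hwin i).1 (hwin i).2 (u i) (v i)
  refine ⟨n, hn, _, ⟨z, hsU fun i _ => (hL i).1 (hzu i), rfl⟩, htV fun i _ => ?_⟩
  rw [Pi.map_iterate_iterate_apply]
  exact (hL i).2 (hzv i)

theorem isOpen_oneCyl (P : Set ℕ) : IsOpen (oneCyl P) := by
  have : Continuous fun x : SpacingSubshift P => x.1 0 :=
    (continuous_apply 0).comp continuous_subtype_val
  exact (isOpen_discrete {true}).preimage this

theorem oneCyl_nonempty (P : Set ℕ) : (oneCyl P).Nonempty :=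
  ⟨⟨fun j => decide (j = 0), fun i j hij hi hj => by simp at hi hj; omega⟩, rfl⟩

theorem mem_of_mem_oneCyl_of_iterate_mem_oneCyl {x : SpacingSubshift P} {n : ℕ} (hn : 0 < n)
    (hx : x ∈ oneCyl P) (hnx : (sigmaP P)^[n] x ∈ oneCyl P) : n ∈ P := by
  have hxn : x.1 n = true := by
    simpa only [oneCyl, mem_ofPred_eq, sigmaP_iterate_apply, zero_add] using hnx
  simpa using x.2 0 n hn hx hxn

theorem exists_forall_mul_mem_of_topTransitive_piMap {ι : Type*} [Finite ι] (a : ι → ℕ)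
    (ha : ∀ i, 0 < a i) (h : TopTransitive (Pi.map fun i => (sigmaP P)^[a i])) :
    ∃ n, 0 < n ∧ ∀ i, a i * n ∈ P := by
  have hC : IsOpen (univ.pi fun _ : ι => oneCyl P) :=
    isOpen_set_pi finite_univ fun _ _ => isOpen_oneCyl P
  have hCne : (univ.pi fun _ : ι => oneCyl P).Nonempty :=
    univ_pi_nonempty_iff.2 fun _ => oneCyl_nonempty P
  obtain ⟨n, hn, _, ⟨x, hx, rfl⟩, hxn⟩ := h _ _ hC hC hCne hCne
  refine ⟨n, hn, fun i => mem_of_mem_oneCyl_of_iterate_mem_oneCyl (Nat.mul_pos (ha i) hn)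
    (hx i trivial) ?_⟩
  rw [← Pi.map_iterate_iterate_apply]
  exact hxn i trivial

end SpacingSubshift

theorem window_subset_progressionSet {m t : ℕ} (L : ℕ) (ht : 1 ≤ t) (htm : t < m) :
    L ≤ t * (m ^ (2 * L + 1) + L + 1) ∧
      Ioo (t * (m ^ (2 * L + 1) + L + 1) - L) (t * (m ^ (2 * L + 1) + L + 1) + L) ⊆
        ProgressionSet m := by
  obtain ⟨s, rfl⟩ : ∃ s, m = s + 1 := ⟨m - 1, by omega⟩
  have hLA : (s + 1) * (L + 1) ≤ (s + 1) ^ (2 * L + 1) := by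
    have : L + 1 ≤ (s + 1) ^ (2 * L) :=
      (Nat.lt_pow_self (by omega)).trans_le (Nat.pow_le_pow_right (by omega) (by omega))
    rw [pow_succ']
    exact Nat.mul_le_mul_left _ this
  have htN : t * ((s + 1) ^ (2 * L + 1) + L + 1) ≤ s * ((s + 1) ^ (2 * L + 1) + L + 1) :=
    Nat.mul_le_mul_right _ (by omega)
  have hNt : (s + 1) ^ (2 * L + 1) + L + 1 ≤ t * ((s + 1) ^ (2 * L + 1) + L + 1) :=
    Nat.le_mul_of_pos_left _ ht
  refine ⟨by omega, fun d ⟨hd₁, hd₂⟩ => ⟨L + 1, by omega, ?_, ?_⟩⟩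
  · rw [show 2 * (L + 1) - 1 = 2 * L + 1 by omega]
    omega
  · rw [show 2 * (L + 1) = 2 * L + 1 + 1 by omega, pow_succ]
    nlinarith

theorem mul_notMem_progressionSet {m n : ℕ} (hn : n ∈ ProgressionSet m) :
    m * n ∉ ProgressionSet m := by
  rintro ⟨j, hj, hj₁, hj₂⟩
  obtain ⟨k, hk, hk₁, hk₂⟩ := hn
  have hm : 2 ≤ m := by
    by_contra! hm
    interval_cases m <;> simp_all [zero_pow (by omega : 2 * k ≠ 0)]
  have hpow {a b : ℕ} : m ^ a < m ^ b ↔ a < b := Nat.pow_lt_pow_iff_right (by omega)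
  have hlow : m ^ (2 * k) ≤ m * n := by
    rw [show 2 * k = 2 * k - 1 + 1 by omega, pow_succ']
    exact Nat.mul_le_mul_left m hk₁
  have hhigh : m * n < m ^ (2 * k + 1) := by
    rw [pow_succ']
    exact Nat.mul_lt_mul_of_pos_left hk₂ (by omega)
  have := hpow.1 (hlow.trans_lt hj₂)
  have := hpow.1 (hj₁.trans_lt hhigh)
  omega

/-- For `m ≥ 2` and `P = P(m)`, the map
`τ = σ_P × σ_P² × ⋯ × σ_P^{m-1}` is transitive, while `τ × σ_P^m` is not; in particular
`σ_P` is weakly mixing but not multi-transitive. -/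
theorem statement11 (m : ℕ) (hm : 2 ≤ m) :
    TopTransitive (starMap (sigmaP (ProgressionSet m)) (m - 1)) ∧
    ¬ TopTransitive (starMap (sigmaP (ProgressionSet m)) m) ∧
    WeaklyMixing (sigmaP (ProgressionSet m)) ∧
    ¬ MultiTransitive (sigmaP (ProgressionSet m)) := by
  have not_trans : ¬ TopTransitive (starMap (sigmaP (ProgressionSet m)) m) := fun h => by
    obtain ⟨n, -, hn⟩ := SpacingSubshift.exists_forall_mul_mem_of_topTransitive_piMap
      (fun i : Fin m => (i : ℕ) + 1) (fun _ => Nat.succ_pos _) h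
    have hmn := hn ⟨m - 1, by omega⟩
    rw [Nat.sub_add_cancel (by omega)] at hmn
    exact mul_notMem_progressionSet (by simpa using hn ⟨0, by omega⟩) hmn
  refine ⟨?_, not_trans, ?_, fun h => not_trans (h m (by omega))⟩
  · exact SpacingSubshift.topTransitive_piMap (fun i : Fin (m - 1) => (i : ℕ) + 1) fun L =>
      ⟨_, by positivity, fun i => window_subset_progressionSet L (by omega) (by omega)⟩
  · have hτ := SpacingSubshift.topTransitive_piMap (P := ProgressionSet m) (fun _ : Fin 2 => 1)
      fun L => ⟨_, by positivity, fun _ => window_subset_progressionSet L le_rfl (by omega)⟩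
    exact hτ.of_semiconj (π := fun x => (x 0, x 1)) (by fun_prop)
      (fun p => ⟨![p.1, p.2], rfl⟩) fun x => rfl
end
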